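/- arXiv:1502.02286 — 3 statements merged into one kernel-verified Lean document; each statement's English description precedes it below -/
import Mathlib

section
/- Let c, σ, σ₁ > 0, μ > r, and |ρ| < 1. The function f(a) = (c + (μ−r)a) / (½(σ²a² + 2ρσσ₁a + σ₁²)) is strictly increasing on the interval (a₁, a₂) and strictly decreasing outside [a₁, a₂], where a₁, a₂ = (−c ± √(c² + (μ−r)²σ₁²/σ² − 2(μ−r)ρcσ₁/σ))/(μ−r). -/
/-!
With `u = c + (μ - r) a` the function becomes, up to a positive factor, `u / (u² + b u + C)`,
where `C` is the discriminant and the quadratic `u² + b u + C` is positive because `|ρ| < 1`.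
For `u / P(u)` one has `v / P(v) - u / P(u) = (v - u)(C - u v) / (P(u) P(v))`, so the function
increases where `u v < C`, i.e. on `[-√C, √C]`, and decreases where `u v > C`, i.e. on each of
the two rays beyond `±√C`. These endpoints correspond to `a₁` and `a₂`.
-/

open Set

lemma sq_add_two_mul_mul_add_sq_pos {ρ x y : ℝ} (hρ : |ρ| < 1) (hy : y ≠ 0) :
    0 < x ^ 2 + 2 * ρ * x * y + y ^ 2 := by
  have hρ2 : ρ ^ 2 < 1 := by rw [← sq_abs]; nlinarith [abs_nonneg ρ]
  have hy2 : 0 < y ^ 2 := by positivity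
  nlinarith [sq_nonneg (x + ρ * y)]

section DivQuadratic

variable {b C : ℝ}

lemma div_quadratic_sub_div_quadratic {u v : ℝ} (hu : u ^ 2 + b * u + C ≠ 0)
    (hv : v ^ 2 + b * v + C ≠ 0) :
    v / (v ^ 2 + b * v + C) - u / (u ^ 2 + b * u + C)
      = (v - u) * (C - u * v) / ((u ^ 2 + b * u + C) * (v ^ 2 + b * v + C)) := by
  rw [div_sub_div _ _ hv hu]
  ring

variable (hP : ∀ u, 0 < u ^ 2 + b * u + C)
include hP

lemma div_quadratic_lt_of_mul_lt {u v : ℝ} (huv : u < v) (h : u * v < C) :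
    u / (u ^ 2 + b * u + C) < v / (v ^ 2 + b * v + C) := by
  rw [← sub_pos, div_quadratic_sub_div_quadratic (hP u).ne' (hP v).ne']
  exact div_pos (mul_pos (sub_pos.mpr huv) (sub_pos.mpr h)) (mul_pos (hP u) (hP v))

lemma div_quadratic_lt_of_lt_mul {u v : ℝ} (huv : u < v) (h : C < u * v) :
    v / (v ^ 2 + b * v + C) < u / (u ^ 2 + b * u + C) := by
  rw [← sub_neg, div_quadratic_sub_div_quadratic (hP u).ne' (hP v).ne']
  exact div_neg_of_neg_of_pos (mul_neg_of_pos_of_neg (sub_pos.mpr huv) (sub_neg.mpr h))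
    (mul_pos (hP u) (hP v))

lemma strictMonoOn_div_quadratic :
    StrictMonoOn (fun u => u / (u ^ 2 + b * u + C)) (Icc (-√C) √C) := by
  intro u ⟨hu₁, hu₂⟩ v ⟨hv₁, hv₂⟩ huv
  have hC : 0 < C := by simpa using hP 0
  have hs0 := Real.sqrt_pos.mpr hC
  exact div_quadratic_lt_of_mul_lt hP huv (by nlinarith [Real.sq_sqrt hC.le])

lemma strictAntiOn_div_quadratic_Iic :
    StrictAntiOn (fun u => u / (u ^ 2 + b * u + C)) (Iic (-√C)) := by
  intro u (hu : u ≤ -√C) v (hv : v ≤ -√C) huv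
  have hC : 0 < C := by simpa using hP 0
  have hs0 := Real.sqrt_pos.mpr hC
  refine div_quadratic_lt_of_lt_mul hP huv ?_
  nlinarith [Real.sq_sqrt hC.le, mul_pos (sub_pos.mpr huv) (show 0 < -v by linarith),
    mul_self_le_mul_self hs0.le (show √C ≤ -v by linarith)]

lemma strictAntiOn_div_quadratic_Ici :
    StrictAntiOn (fun u => u / (u ^ 2 + b * u + C)) (Ici √C) := by
  intro u (hu : √C ≤ u) v (hv : √C ≤ v) huv
  have hC : 0 < C := by simpa using hP 0
  have hs0 := Real.sqrt_pos.mpr hC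
  refine div_quadratic_lt_of_lt_mul hP huv ?_
  nlinarith [Real.sq_sqrt hC.le, mul_pos (sub_pos.mpr huv) (show 0 < u by linarith),
    mul_self_le_mul_self hs0.le hu]

end DivQuadratic

section ShiftedQuadratic

variable {c q σ σ₁ ρ : ℝ}

lemma shifted_quadratic_eq (hσ : σ ≠ 0) (a : ℝ) :
    (c + q * a) ^ 2 + 2 * (ρ * σ₁ * q / σ - c) * (c + q * a)
        + (c ^ 2 + q ^ 2 * σ₁ ^ 2 / σ ^ 2 - 2 * q * ρ * c * σ₁ / σ)
      = 2 * q ^ 2 / σ ^ 2 * ((1 / 2) * (σ ^ 2 * a ^ 2 + 2 * ρ * σ * σ₁ * a + σ₁ ^ 2)) := by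
  field_simp
  ring

lemma shifted_quadratic_pos (hσ : σ ≠ 0) (hq : q ≠ 0) (hσ₁ : σ₁ ≠ 0) (hρ : |ρ| < 1) (u : ℝ) :
    0 < u ^ 2 + 2 * (ρ * σ₁ * q / σ - c) * u
      + (c ^ 2 + q ^ 2 * σ₁ ^ 2 / σ ^ 2 - 2 * q * ρ * c * σ₁ / σ) := by
  have hu : c + q * ((u - c) / q) = u := by rw [mul_div_cancel₀ _ hq, add_sub_cancel]
  rw [← hu, shifted_quadratic_eq hσ]
  have := sq_add_two_mul_mul_add_sq_pos (x := σ * ((u - c) / q)) hρ hσ₁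
  exact mul_pos (by positivity) (mul_pos one_half_pos (by linear_combination this))

end ShiftedQuadratic

theorem stmt_0_general (c r μ σ σ₁ ρ : ℝ) (hσ : 0 < σ) (hσ₁ : 0 < σ₁)
    (hμr : r < μ) (hρ : |ρ| < 1)
    (f : ℝ → ℝ)
    (hf : ∀ a, f a = (c + (μ - r) * a) / ((1/2) * (σ^2 * a^2 + 2*ρ*σ*σ₁*a + σ₁^2)))
    (a₁ a₂ : ℝ)
    (ha₁ : a₁ = (-c - Real.sqrt (c^2 + (μ-r)^2*σ₁^2/σ^2 - 2*(μ-r)*ρ*c*σ₁/σ)) / (μ - r))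
    (ha₂ : a₂ = (-c + Real.sqrt (c^2 + (μ-r)^2*σ₁^2/σ^2 - 2*(μ-r)*ρ*c*σ₁/σ)) / (μ - r)) :
    StrictMonoOn f (Ioo a₁ a₂) ∧ StrictAntiOn f (Iic a₁) ∧ StrictAntiOn f (Ici a₂) := by
  have hq : 0 < μ - r := sub_pos.mpr hμr
  have hden := shifted_quadratic_eq (c := c) (q := μ - r) (ρ := ρ) (σ₁ := σ₁) hσ.ne'
  have hP := shifted_quadratic_pos (c := c) hσ.ne' hq.ne' hσ₁.ne' hρ
  set C := c^2 + (μ-r)^2*σ₁^2/σ^2 - 2*(μ-r)*ρ*c*σ₁/σ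
  set b := 2 * (ρ * σ₁ * (μ - r) / σ - c)
  set k := 2 * (μ - r) ^ 2 / σ ^ 2
  have hf_comp : f = (k * ·) ∘ (fun u => u / (u ^ 2 + b * u + C)) ∘ (c + (μ - r) * ·) := by
    funext a
    rw [Function.comp_apply, Function.comp_apply, hf, hden, ← mul_div_assoc,
      mul_div_mul_left _ _ (by positivity)]
  have hk : StrictMono (k * ·) := strictMono_mul_left_of_pos (by positivity)
  have haff : StrictMono (c + (μ - r) * ·) := (strictMono_mul_left_of_pos hq).const_add c
  have h₁ : c + (μ - r) * a₁ = -√C := by rw [ha₁]; field_simp; ring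
  have h₂ : c + (μ - r) * a₂ = √C := by rw [ha₂]; field_simp; ring
  rw [hf_comp]
  refine ⟨hk.comp_strictMonoOn ((strictMonoOn_div_quadratic hP).comp (haff.strictMonoOn _) ?_),
    hk.comp_strictAntiOn
      ((strictAntiOn_div_quadratic_Iic hP).comp_strictMonoOn (haff.strictMonoOn _) ?_),
    hk.comp_strictAntiOn
      ((strictAntiOn_div_quadratic_Ici hP).comp_strictMonoOn (haff.strictMonoOn _) ?_)⟩
  · exact fun a ha => ⟨h₁ ▸ (haff ha.1).le, h₂ ▸ (haff ha.2).le⟩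
  · exact fun a ha => h₁ ▸ haff.monotone ha
  · exact fun a ha => h₂ ▸ haff.monotone ha

/-- monotonicity of f(a) = (c+(μ−r)a)/(½(σ²a²+2ρσσ₁a+σ₁²)). -/
theorem stmt_0 (c r μ σ σ₁ ρ : ℝ) (hc : 0 < c) (hσ : 0 < σ) (hσ₁ : 0 < σ₁)
    (hμr : r < μ) (hρ : |ρ| < 1)
    (f : ℝ → ℝ)
    (hf : ∀ a, f a = (c + (μ - r) * a) / ((1/2) * (σ^2 * a^2 + 2*ρ*σ*σ₁*a + σ₁^2)))
    (a₁ a₂ : ℝ)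
    (ha₁ : a₁ = (-c - Real.sqrt (c^2 + (μ-r)^2*σ₁^2/σ^2 - 2*(μ-r)*ρ*c*σ₁/σ)) / (μ - r))
    (ha₂ : a₂ = (-c + Real.sqrt (c^2 + (μ-r)^2*σ₁^2/σ^2 - 2*(μ-r)*ρ*c*σ₁/σ)) / (μ - r)) :
    StrictMonoOn f (Ioo a₁ a₂) ∧ StrictAntiOn f (Iic a₁) ∧ StrictAntiOn f (Ici a₂) :=
  stmt_0_general c r μ σ σ₁ ρ hσ hσ₁ hμr hρ f hf a₁ a₂ ha₁ ha₂
end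

section
/- Let c_ρ, σ_ρ > 0 and γ > 0 be constants. Suppose ṽ : (0,∞) → ℝ is continuously differentiable with ṽ(0+) = 0, ṽ′ < 0 near 0, and satisfies (c_ρ + rx)(ṽ(x)+1)ṽ′(x) + ½σ_ρ²(ṽ′(x))² − λṽ′(x)∫₀ˣ H(y)(ṽ(x−y)+1)dy = γ(ṽ(x)+1)², where H(y) → 1 as y → 0. If ṽ(x) = αx^β(1+o(1)) and ṽ′(x) = βαx^{β−1}(1+o(1)) as x → 0 for some constants β > 0 and α ≠ 0, then β = 1 and α satisfies c_ρ α + ½σ_ρ²α² = γ; since α < 0, α = −(c_ρ + √(c_ρ² + 2γσ_ρ²))/σ_ρ². -/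
open Set Filter Topology Asymptotics MeasureTheory
open scoped Interval

/-! Write `w = ṽ'`. The ansatz gives `w(x) ~ βαx^(β-1)`, and `w < 0` near `0` forces `α < 0`.
The nonlocal term is `λ w(x) · O(x) → 0`, because `w(x) x ~ βαx^β → 0`, so the local part
`(c_ρ + r x)(ṽ + 1) w + ½σ_ρ² w²` tends to `γ`. If `β < 1` then `w → -∞` and the local part
tends to `+∞`; if `β > 1` then `w → 0` and it tends to `0 ≠ γ`. Hence `β = 1`, `w → α`, and in
the limit `c_ρα + ½σ_ρ²α² = γ`, a quadratic whose only negative root is the stated one. -/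

lemma tendsto_rpow_nhdsGT_zero_of_pos {s : ℝ} (hs : 0 < s) :
    Tendsto (fun x : ℝ => x ^ s) (𝓝[>] 0) (𝓝 0) := by
  simpa [Real.zero_rpow hs.ne'] using
    (Real.continuousAt_rpow_const 0 s (Or.inr hs.le)).tendsto.mono_left nhdsWithin_le_nhds

lemma neg_of_tendsto_div_mul_rpow {w : ℝ → ℝ} {c s : ℝ} (hw : ∀ᶠ x in 𝓝[>] 0, w x < 0)
    (h : Tendsto (fun x => w x / (c * x ^ s)) (𝓝[>] 0) (𝓝 1)) : c < 0 := by
  obtain ⟨x, hwx, hdiv, hx⟩ :=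
    (hw.and ((h.eventually (eventually_gt_nhds one_pos)).and self_mem_nhdsWithin)).exists
  have hden : c * x ^ s < 0 := by
    rcases div_pos_iff.mp hdiv with ⟨hw', _⟩ | ⟨_, hneg⟩
    · exact absurd hw' hwx.not_gt
    · exact hneg
  exact Left.neg_of_mul_neg_left hden (Real.rpow_pos_of_pos hx s).le

lemma tendsto_mul_id_of_isEquivalent_rpow {w : ℝ → ℝ} {c s : ℝ} (hs : 0 < s + 1)
    (hw : w ~[𝓝[>] 0] fun x => c * x ^ s) : Tendsto (fun x => w x * x) (𝓝[>] 0) (𝓝 0) := by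
  have hwx : (fun x => w x * x) ~[𝓝[>] 0] fun x => c * x ^ (s + 1) := by
    refine (hw.mul (IsEquivalent.refl (u := id))).congr_right ?_
    filter_upwards [self_mem_nhdsWithin] with x hx
    simp [Real.rpow_add_one (ne_of_gt hx), mul_assoc]
  exact hwx.symm.tendsto_nhds (by simpa using (tendsto_rpow_nhdsGT_zero_of_pos hs).const_mul c)

lemma isBigO_intervalIntegral_mul_comp_sub {f g : ℝ → ℝ}
    (hf : f =O[𝓝[>] 0] (fun _ => (1 : ℝ))) (hg : g =O[𝓝[>] 0] (fun _ => (1 : ℝ))) :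
    (fun x => ∫ y in (0 : ℝ)..x, f y * g (x - y)) =O[𝓝[>] 0] id := by
  obtain ⟨A, hA⟩ := hf.bound
  obtain ⟨B, hB⟩ := hg.bound
  obtain ⟨δ, hδ, hAB⟩ := mem_nhdsGT_iff_exists_Ioo_subset.1 (hA.and hB)
  refine IsBigO.of_bound (A * B) ?_
  filter_upwards [Ioo_mem_nhdsGT hδ] with x hx
  -- the endpoint `y = x`, where `g` would be evaluated at `0`, is a null set
  have hbound : ∀ᵐ y, y ∈ Ι 0 x → ‖f y * g (x - y)‖ ≤ A * B := by
    filter_upwards [(countable_singleton x).ae_notMem volume] with y hyx hy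
    rw [uIoc_of_le hx.1.le] at hy
    have hyx : y < x := lt_of_le_of_ne hy.2 hyx
    have hfy := (hAB ⟨hy.1, hyx.trans hx.2⟩).1
    have hgy := (hAB ⟨sub_pos.2 hyx, by linarith [hy.1, hx.2]⟩).2
    simp only [norm_one, mul_one] at hfy hgy
    rw [norm_mul]
    exact mul_le_mul hfy hgy (norm_nonneg _) ((norm_nonneg _).trans hfy)
  simpa [abs_of_pos hx.1] using intervalIntegral.norm_integral_le_of_norm_le_const_ae hbound

lemma tendsto_mul_add_mul_sq_atTop {α : Type*} {l : Filter α} {p w : α → ℝ} {p₀ c : ℝ}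
    (hc : 0 < c) (hp : Tendsto p l (𝓝 p₀)) (hw : Tendsto w l atBot) :
    Tendsto (fun x => p x * w x + c * w x ^ 2) l atTop :=
  ((hp.add_atBot (hw.const_mul_atBot hc)).atBot_mul_atBot₀ hw).congr fun x => by ring

lemma exponent_eq_zero_of_tendsto_mul_add_mul_sq {p w : ℝ → ℝ} {p₀ c k s γ : ℝ} (hc : 0 < c)
    (hk : k < 0) (hγ : γ ≠ 0) (hp : Tendsto p (𝓝[>] 0) (𝓝 p₀))
    (hw : w ~[𝓝[>] 0] fun x => k * x ^ s)
    (hG : Tendsto (fun x => p x * w x + c * w x ^ 2) (𝓝[>] 0) (𝓝 γ)) : s = 0 := by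
  rcases lt_trichotomy s 0 with hneg | hzero | hpos
  · have hw_bot : Tendsto w (𝓝[>] 0) atBot :=
      hw.symm.tendsto_atBot ((tendsto_rpow_neg_nhdsGT_zero hneg).const_mul_atTop_of_neg hk)
    exact not_tendsto_nhds_of_tendsto_atTop (tendsto_mul_add_mul_sq_atTop hc hp hw_bot) γ hG |>.elim
  · exact hzero
  · have hw0 : Tendsto w (𝓝[>] 0) (𝓝 0) :=
      hw.symm.tendsto_nhds (by simpa using (tendsto_rpow_nhdsGT_zero_of_pos hpos).const_mul k)
    have hG0 := (hp.mul hw0).add ((hw0.pow 2).const_mul c)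
    rw [mul_zero, zero_pow two_ne_zero, mul_zero, add_zero] at hG0
    exact absurd (tendsto_nhds_unique hG0 hG) hγ.symm

lemma eq_of_mul_add_half_mul_sq_eq_of_neg {c σ γ α : ℝ} (hσ : 0 < σ) (hγ : 0 ≤ γ)
    (hα : α < 0) (h : c * α + 1 / 2 * σ * α ^ 2 = γ) :
    α = -(c + √(c ^ 2 + 2 * γ * σ)) / σ := by
  set s := √(c ^ 2 + 2 * γ * σ)
  have hs : s ^ 2 = c ^ 2 + 2 * γ * σ := Real.sq_sqrt (by positivity)
  have hcs : c ≤ s := Real.le_sqrt_of_sq_le (by nlinarith)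
  have hroots : (σ * α + c - s) * (σ * α + c + s) = 0 := by nlinarith
  rcases mul_eq_zero.1 hroots with hplus | hminus
  · nlinarith
  · field_simp
    linarith

theorem stmt_8_general (r lam cρ σρ2 γ α β : ℝ)
    (hσρ2 : 0 < σρ2) (hγ : 0 < γ)
    (hβ : 0 < β)
    (H : ℝ → ℝ) (hH1 : Tendsto H (nhdsWithin 0 (Ioi 0)) (nhds 1))
    (v : ℝ → ℝ)
    (hv0 : Tendsto v (nhdsWithin 0 (Ioi 0)) (nhds 0))
    (hv' : ∃ ε > (0:ℝ), ∀ x ∈ Ioo (0:ℝ) ε, deriv v x < 0)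
    (heq : ∀ x > (0:ℝ),
        (cρ + r * x) * (v x + 1) * deriv v x + (1/2) * σρ2 * (deriv v x)^2
          - lam * deriv v x * ∫ y in (0:ℝ)..x, H y * (v (x - y) + 1)
        = γ * (v x + 1)^2)
    (hasym' : Tendsto (fun x => deriv v x / (β * α * x ^ (β - 1)))
        (nhdsWithin 0 (Ioi 0)) (nhds 1)) :
    β = 1 ∧ cρ * α + (1/2) * σρ2 * α^2 = γ ∧
    α = -(cρ + Real.sqrt (cρ^2 + 2 * γ * σρ2)) / σρ2 := by
  obtain ⟨ε, hε, hv'⟩ := hv'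
  have hα : α < 0 := Left.neg_of_mul_neg_right
    (neg_of_tendsto_div_mul_rpow (mem_of_superset (Ioo_mem_nhdsGT hε) hv') hasym') hβ.le
  have hw : deriv v ~[𝓝[>] 0] fun x => β * α * x ^ (β - 1) := isEquivalent_of_tendsto_one hasym'
  have hv1 : Tendsto (fun x => v x + 1) (𝓝[>] 0) (𝓝 1) := by simpa using hv0.add_const 1
  have hp : Tendsto (fun x => (cρ + r * x) * (v x + 1)) (𝓝[>] 0) (𝓝 cρ) := by
    have hlin : Tendsto (fun x => cρ + r * x) (𝓝[>] 0) (𝓝 cρ) :=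
      ((continuous_const.add (continuous_const_mul r)).tendsto' 0 cρ (by simp)).mono_left
        nhdsWithin_le_nhds
    simpa using hlin.mul hv1
  have hI : Tendsto (fun x => lam * deriv v x * ∫ y in (0:ℝ)..x, H y * (v (x - y) + 1))
      (𝓝[>] 0) (𝓝 0) := by
    have hO := (isBigO_refl (deriv v) _).mul
      (isBigO_intervalIntegral_mul_comp_sub (hH1.isBigO_one ℝ) (hv1.isBigO_one ℝ))
    simpa [mul_assoc] using
      (hO.trans_tendsto (tendsto_mul_id_of_isEquivalent_rpow (by linarith) hw)).const_mul lam
  have hG : Tendsto (fun x => (cρ + r * x) * (v x + 1) * deriv v x + 1 / 2 * σρ2 * deriv v x ^ 2)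
      (𝓝[>] 0) (𝓝 γ) := by
    have hRHS := ((hv1.pow 2).const_mul γ).add hI
    rw [one_pow, mul_one, add_zero] at hRHS
    refine hRHS.congr' ?_
    filter_upwards [self_mem_nhdsWithin] with x hx
    linarith [heq x hx]
  have hβ1 : β = 1 := sub_eq_zero.1 <| exponent_eq_zero_of_tendsto_mul_add_mul_sq
    (by positivity) (mul_neg_of_pos_of_neg hβ hα) hγ.ne' hp hw hG
  subst hβ1
  have hwα : Tendsto (deriv v) (𝓝[>] 0) (𝓝 α) := hw.symm.tendsto_nhds (by simp)
  have hquad : cρ * α + 1 / 2 * σρ2 * α ^ 2 = γ :=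
    tendsto_nhds_unique ((hp.mul hwα).add ((hwα.pow 2).const_mul _)) hG
  exact ⟨rfl, hquad, eq_of_mul_add_half_mul_sq_eq_of_neg hσρ2 hγ.le hα hquad⟩

/-- matching the power-law ansatz ṽ(x) = αx^β(1+o(1)) at 0 in the equation
for ṽ forces β = 1 and c_ρα + ½σ_ρ²α² = γ; since α < 0, α = −(c_ρ+√(c_ρ²+2γσ_ρ²))/σ_ρ². -/
theorem stmt_8 (r lam cρ σρ2 γ α β : ℝ)
    (hr : 0 ≤ r) (hlam : 0 ≤ lam) (hcρ : 0 < cρ) (hσρ2 : 0 < σρ2) (hγ : 0 < γ)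
    (hβ : 0 < β) (hα : α ≠ 0)
    (H : ℝ → ℝ) (hHcont : Continuous H) (hH1 : Tendsto H (nhdsWithin 0 (Ioi 0)) (nhds 1))
    (v : ℝ → ℝ) (hvd : ∀ x > (0:ℝ), DifferentiableAt ℝ v x)
    (hv0 : Tendsto v (nhdsWithin 0 (Ioi 0)) (nhds 0))
    (hv' : ∃ ε > (0:ℝ), ∀ x ∈ Ioo (0:ℝ) ε, deriv v x < 0)
    (heq : ∀ x > (0:ℝ),
        (cρ + r * x) * (v x + 1) * deriv v x + (1/2) * σρ2 * (deriv v x)^2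
          - lam * deriv v x * ∫ y in (0:ℝ)..x, H y * (v (x - y) + 1)
        = γ * (v x + 1)^2)
    (hasym : Tendsto (fun x => v x / (α * x ^ β)) (nhdsWithin 0 (Ioi 0)) (nhds 1))
    (hasym' : Tendsto (fun x => deriv v x / (β * α * x ^ (β - 1)))
        (nhdsWithin 0 (Ioi 0)) (nhds 1)) :
    β = 1 ∧ cρ * α + (1/2) * σρ2 * α^2 = γ ∧
    α = -(cρ + Real.sqrt (cρ^2 + 2 * γ * σρ2)) / σρ2 :=
  stmt_8_general r lam cρ σρ2 γ α β hσρ2 hγ hβ H hH1 v hv0 hv' heq hasym'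
end

section
/- Let c_ρ ∈ ℝ, σ_ρ > 0, γ ≥ 0, and B = (c_ρ + √(c_ρ² + 2γσ_ρ²))/σ_ρ². If γ = (μ−r)²/(2σ²) with μ > r and a* = −c/(μ−r) + √(c²/(μ−r)² + (2σ₁c/(σ(μ−r)))(ρ₁−ρ)) with ρ₁ = (μ−r)σ₁/(2cσ) and c_ρ = c − ρ(μ−r)σ₁/σ, σ_ρ² = σ₁²(1−ρ²), then B = (μ−r)/(σ²(a* + ρσ₁/σ)). -/
/-!
Rationalising the numerator, `B = 2γ / (√D - c_ρ)` with `D = c_ρ² + 2γσ_ρ²`. The radicand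
defining `a*` is exactly `D / (μ - r)²`, so `a* + ρσ₁/σ = (√D - c_ρ) / (μ - r)`, which is
positive, and `2γ = (μ - r)² / σ²` turns the first expression into the second.
-/

theorem add_sqrt_sq_add_mul_div_eq {a q v : ℝ} (hq : 0 < q) (hv : 0 < v) :
    (a + √(a ^ 2 + q * v)) / v = q / (√(a ^ 2 + q * v) - a) := by
  have hsq : √(a ^ 2 + q * v) ^ 2 = a ^ 2 + q * v := Real.sq_sqrt (by positivity)
  have hlt : a < √(a ^ 2 + q * v) :=
    Real.lt_sqrt_of_sq_lt (by nlinarith [mul_pos hq hv])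
  rw [div_eq_div_iff hv.ne' (sub_pos.mpr hlt).ne']
  linear_combination hsq

theorem neg_div_add_sqrt_add_eq {c m σ σ₁ ρ : ℝ} (hc : c ≠ 0) (hσ : σ ≠ 0) (hm : 0 < m) :
    -c / m + √(c ^ 2 / m ^ 2 + (2 * σ₁ * c / (σ * m)) * (m * σ₁ / (2 * c * σ) - ρ))
        + ρ * σ₁ / σ
      = (√((c - ρ * m * σ₁ / σ) ^ 2 + 2 * (m ^ 2 / (2 * σ ^ 2)) * (σ₁ ^ 2 * (1 - ρ ^ 2)))
          - (c - ρ * m * σ₁ / σ)) / m := by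
  have hradicand : c ^ 2 / m ^ 2 + (2 * σ₁ * c / (σ * m)) * (m * σ₁ / (2 * c * σ) - ρ)
      = ((c - ρ * m * σ₁ / σ) ^ 2 + 2 * (m ^ 2 / (2 * σ ^ 2)) * (σ₁ ^ 2 * (1 - ρ ^ 2)))
          / m ^ 2 := by
    field_simp
    ring
  rw [hradicand, Real.sqrt_div' _ (sq_nonneg m), Real.sqrt_sq hm.le]
  field_simp
  ring

/-- identity B = (μ−r)/(σ²(a* + ρσ₁/σ)). -/
theorem stmt_9 (c r μ σ σ₁ ρ : ℝ) (hc : 0 < c) (hσ : 0 < σ) (hσ₁ : 0 < σ₁)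
    (hμr : r < μ) (hρ : |ρ| < 1)
    (ρ₁ cρ σρ2 γ astar B : ℝ)
    (hρ₁ : ρ₁ = (μ - r) * σ₁ / (2 * c * σ))
    (hcρ : cρ = c - ρ * (μ - r) * σ₁ / σ)
    (hσρ2 : σρ2 = σ₁^2 * (1 - ρ^2))
    (hγ : γ = (μ - r)^2 / (2 * σ^2))
    (hastar : astar = -c / (μ - r)
        + Real.sqrt (c^2 / (μ - r)^2 + (2 * σ₁ * c / (σ * (μ - r))) * (ρ₁ - ρ)))
    (hB : B = (cρ + Real.sqrt (cρ^2 + 2 * γ * σρ2)) / σρ2) :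
    B = (μ - r) / (σ^2 * (astar + ρ * σ₁ / σ)) := by
  have hm : 0 < μ - r := sub_pos.mpr hμr
  have hσρ2_pos : 0 < σ₁ ^ 2 * (1 - ρ ^ 2) := by
    have : ρ ^ 2 < 1 := by simpa using sq_lt_one_iff_abs_lt_one ρ |>.mpr hρ
    nlinarith [pow_pos hσ₁ 2]
  have hγ2 : 0 < 2 * ((μ - r) ^ 2 / (2 * σ ^ 2)) := by positivity
  subst hρ₁ hcρ hσρ2 hγ hastar hB
  rw [add_sqrt_sq_add_mul_div_eq hγ2 hσρ2_pos, neg_div_add_sqrt_add_eq hc.ne' hσ.ne' hm]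
  field_simp
end
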